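/- arXiv:1705.08483 — 3 statements merged into one kernel-verified Lean document; each statement's English description precedes it below -/
import Mathlib

section
/- The flow on Maurer-Cartan elements preserves flatness: if x(t) ∈ A_{-1} solves x'(t) = d e - [e, x(t)] and x(0) satisfies the Maurer-Cartan equation d x + (1/2)[x,x] = 0, then x(t) satisfies the Maurer-Cartan equation for all t. Equivalently, the curvature F(t) = d x(t) + (1/2)[x(t),x(t)] satisfies F'(t) = -[e, F(t)] and hence vanishes identically if F(0)=0. -/
/-- Transport an element of a graded component along an equality of degrees. -/
def cst {L : ℤ → Type*} {i j : ℤ} (h : i = j) (x : L i) : L j := h ▸ x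

/-- A cast between graded components as a continuous linear map. -/
noncomputable def castCLM {L : ℤ → Type*} [∀ i, NormedAddCommGroup (L i)]
    [∀ i, NormedSpace ℝ (L i)] {i j : ℤ} (h : i = j) : L i →L[ℝ] L j :=
  @Eq.rec ℤ i (fun j _ => L i →L[ℝ] L j) (ContinuousLinearMap.id ℝ (L i)) j h

/-- Abstract, cast-free form of the curvature computation. -/
theorem alg_lemma {V1 V2 : Type*}
    [NormedAddCommGroup V1] [NormedSpace ℝ V1]
    [NormedAddCommGroup V2] [NormedSpace ℝ V2]
    (d1 : V1 →L[ℝ] V2) (Be : V1 →L[ℝ] V1) (C : V2 →L[ℝ] V2)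
    (B : V1 →L[ℝ] V1 →L[ℝ] V2) (P y : V1)
    (h1 : d1 P = 0)
    (h2 : ∀ z : V1, d1 (Be z) = B P z + C (d1 z))
    (h3 : ∀ u v : V1, B u v = B v u)
    (h4 : ∀ u v : V1, C (B u v) = B (Be u) v + B u (Be v)) :
    d1 (P - Be y) + (1 / 2 : ℝ) • (B (P - Be y) y + B y (P - Be y))
      = -(C (d1 y + (1 / 2 : ℝ) • B y y)) := by
  have e1 : B y (P - Be y) = B (P - Be y) y := h3 _ _
  have e2 : B y (Be y) = B (Be y) y := h3 _ _
  simp only [map_sub, map_add, map_smul, ContinuousLinearMap.sub_apply, h1, h2, e1, e2, h4]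
  module

/-- the flow on Maurer-Cartan elements preserves flatness.  In a
complete differential graded Lie algebra over ℝ, if `x(t) ∈ A_{-1}` solves
`x' = d e - [e, x]` then the curvature `F(t) = d x(t) + (1/2)[x(t),x(t)]` satisfies
`F'(t) = -[e, F(t)]`; hence (solutions of this linear ODE vanishing at `0` being
identically zero) if `x 0` satisfies Maurer-Cartan then so does `x t` for all `t`. -/
theorem flow_preserves_flatness
    (L : ℤ → Type*) [∀ i, NormedAddCommGroup (L i)] [∀ i, NormedSpace ℝ (L i)]
    (br : ∀ i j : ℤ, L i →L[ℝ] L j →L[ℝ] L (i + j))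
    (d : ∀ i : ℤ, L i →L[ℝ] L (i - 1))
    (hd2 : ∀ (i : ℤ) (x : L i), d (i - 1) (d i x) = 0)
    (hanti : ∀ (i j : ℤ) (x : L i) (y : L j),
      br i j x y = -(((-1 : ℝ) ^ (i * j)) • cst (add_comm j i) (br j i y x)))
    (hjac : ∀ (i j k : ℤ) (x : L i) (y : L j) (z : L k),
      br i (j + k) x (br j k y z)
        = cst (by omega : (i + j) + k = i + (j + k)) (br (i + j) k (br i j x y) z)
          + ((-1 : ℝ) ^ (i * j)) •
            cst (by omega : j + (i + k) = i + (j + k)) (br j (i + k) y (br i k x z)))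
    (hleib : ∀ (i j : ℤ) (x : L i) (y : L j),
      d (i + j) (br i j x y)
        = cst (by omega : (i - 1) + j = i + j - 1) (br (i - 1) j (d i x) y)
          + ((-1 : ℝ) ^ i) •
            cst (by omega : i + (j - 1) = i + j - 1) (br i (j - 1) x (d j y)))
    (e : L 0) (x : ℝ → L (-1))
    (hx : ∀ t, HasDerivAt x
      (cst (by omega : (0 : ℤ) - 1 = -1) (d 0 e)
        - cst (by omega : (0 : ℤ) + (-1) = -1) (br 0 (-1) e (x t))) t)
    (huniq : ∀ G : ℝ → L ((-1) - 1),
      (∀ t, HasDerivAt G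
        (-(cst (by omega : (0 : ℤ) + ((-1) - 1) = (-1) - 1) (br 0 ((-1) - 1) e (G t)))) t) →
      G 0 = 0 → ∀ t, G t = 0) :
    (∀ t, HasDerivAt
        (fun s => d (-1) (x s)
          + (1 / 2 : ℝ) •
              cst (by omega : (-1 : ℤ) + (-1) = (-1) - 1) (br (-1) (-1) (x s) (x s)))
        (-(cst (by omega : (0 : ℤ) + ((-1) - 1) = (-1) - 1)
            (br 0 ((-1) - 1) e
              (d (-1) (x t)
                + (1 / 2 : ℝ) •
                    cst (by omega : (-1 : ℤ) + (-1) = (-1) - 1)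
                      (br (-1) (-1) (x t) (x t))))))
        t)
    ∧ ((d (-1) (x 0)
          + (1 / 2 : ℝ) •
              cst (by omega : (-1 : ℤ) + (-1) = (-1) - 1) (br (-1) (-1) (x 0) (x 0)) = 0) →
        ∀ t, d (-1) (x t)
          + (1 / 2 : ℝ) •
              cst (by omega : (-1 : ℤ) + (-1) = (-1) - 1) (br (-1) (-1) (x t) (x t)) = 0) := by
  have main : ∀ t, HasDerivAt
      (fun s => d (-1) (x s)
        + (1 / 2 : ℝ) •
            cst (by omega : (-1 : ℤ) + (-1) = (-1) - 1) (br (-1) (-1) (x s) (x s)))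
      (-(cst (by omega : (0 : ℤ) + ((-1) - 1) = (-1) - 1)
          (br 0 ((-1) - 1) e
            (d (-1) (x t)
              + (1 / 2 : ℝ) •
                  cst (by omega : (-1 : ℤ) + (-1) = (-1) - 1)
                    (br (-1) (-1) (x t) (x t))))))
      t := by
    intro t
    -- abbreviations
    set Dt := cst (by omega : (0 : ℤ) - 1 = -1) (d 0 e)
        - cst (by omega : (0 : ℤ) + (-1) = -1) (br 0 (-1) e (x t)) with hDt
    -- derivative of the linear part
    have h1 : HasDerivAt (fun s => d (-1) (x s)) (d (-1) Dt) t :=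
      (d (-1)).hasFDerivAt.comp_hasDerivAt t (hx t)
    -- derivative of the bilinear part
    have h2 : HasDerivAt (fun s => br (-1) (-1) (x s)) (br (-1) (-1) Dt) t :=
      (br (-1) (-1)).hasFDerivAt.comp_hasDerivAt t (hx t)
    have h3 : HasDerivAt (fun s => br (-1) (-1) (x s) (x s))
        (br (-1) (-1) Dt (x t) + br (-1) (-1) (x t) Dt) t := h2.clm_apply (hx t)
    have h4 : HasDerivAt
        (fun s => cst (by omega : (-1 : ℤ) + (-1) = (-1) - 1) (br (-1) (-1) (x s) (x s)))
        (castCLM (by omega : (-1 : ℤ) + (-1) = (-1) - 1)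
          (br (-1) (-1) Dt (x t) + br (-1) (-1) (x t) Dt)) t := h3
    have h5 := h1.add (h4.const_smul (1 / 2 : ℝ))
    -- cast-free continuous-linear-map versions of the structure maps
    let B11 : L (-1 : ℤ) →L[ℝ] L (-1 : ℤ) →L[ℝ] L ((-1 : ℤ) - 1) :=
      (ContinuousLinearMap.compL ℝ (L (-1 : ℤ)) (L ((-1 : ℤ) + (-1))) (L ((-1 : ℤ) - 1))
        (castCLM (by omega))).comp (br (-1) (-1))
    let Be : L (-1 : ℤ) →L[ℝ] L (-1 : ℤ) :=
      (castCLM (by omega : (0 : ℤ) + (-1) = -1)).comp (br 0 (-1) e)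
    let C : L ((-1 : ℤ) - 1) →L[ℝ] L ((-1 : ℤ) - 1) :=
      (castCLM (by omega : (0 : ℤ) + ((-1) - 1) = (-1) - 1)).comp (br 0 ((-1) - 1) e)
    let P : L (-1 : ℤ) := cst (by omega : (0 : ℤ) - 1 = -1) (d 0 e)
    have H1 : d (-1) P = 0 := hd2 0 e
    have H2 : ∀ z : L (-1 : ℤ), d (-1) (Be z) = B11 P z + C (d (-1) z) := by
      intro z
      have h := hleib 0 (-1) e z
      rw [zpow_zero, one_smul] at h
      exact h
    have H3 : ∀ u v : L (-1 : ℤ), B11 u v = B11 v u := by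
      intro u v
      have h := hanti (-1) (-1) u v
      norm_num at h
      exact h
    have H4 : ∀ u v : L (-1 : ℤ), C (B11 u v) = B11 (Be u) v + B11 u (Be v) := by
      intro u v
      have h := hjac 0 (-1) (-1) e u v
      norm_num at h
      exact h
    have key := alg_lemma (d (-1)) Be C B11 P (x t) H1 H2 H3 H4
    exact h5.congr_deriv key
  refine ⟨main, fun h0 t => ?_⟩
  have := huniq (fun s => d (-1) (x s)
      + (1 / 2 : ℝ) •
          cst (by omega : (-1 : ℤ) + (-1) = (-1) - 1) (br (-1) (-1) (x s) (x s)))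
    (fun t => main t) h0 t
  exact this
end

section
/- In the free Lie algebra on generators e, f (completed), the element v = BCH(-(1/2)BCH(e,f), e) is fixed by the involution ι determined by ι(e) = -f, ι(f) = -e; that is, ι(v) = v. -/
/-- in the completed free Lie algebra on generators `e`, `f` (modeled
here as a Lie algebra `L` over ℚ equipped with the Baker–Campbell–Hausdorff product
`bch`, which is associative, additive on commuting elements, satisfies
`BCH(-y,-x) = -BCH(x,y)` and is natural under Lie algebra automorphisms), the element
`v = BCH(-(1/2)BCH(e,f), e)` is fixed by the involution `ι` determined by
`ι(e) = -f`, `ι(f) = -e`:  `ι(v) = v`. -/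
theorem iota_fixes_v
    (L : Type*) [LieRing L] [LieAlgebra ℚ L]
    (bch : L → L → L)
    (hassoc : ∀ x y z : L, bch (bch x y) z = bch x (bch y z))
    (hcomm : ∀ x y : L, ⁅x, y⁆ = 0 → bch x y = x + y)
    (hanti : ∀ x y : L, bch (-x) (-y) = -(bch y x))
    (e f : L)
    (ι : L ≃ₗ⁅ℚ⁆ L)
    (hιe : ι e = -f) (hιf : ι f = -e)
    (hnat : ∀ x y : L, ι (bch x y) = bch (ι x) (ι y)) :
    ι (bch (-((1 / 2 : ℚ) • bch e f)) e) = bch (-((1 / 2 : ℚ) • bch e f)) e := by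
  set c := bch e f with hc
  have hιc : ι c = -c := by
    rw [hc, hnat, hιe, hιf, hanti]
  set v := bch (-((1 / 2 : ℚ) • c)) e with hv
  -- bch f (-f) = 0
  have hf0 : bch f (-f) = 0 := by
    rw [hcomm f (-f) (by simp), add_neg_cancel]
  -- bch v 0 = v
  have hv0 : bch v 0 = v := by
    rw [hcomm v 0 (by simp), add_zero]
  -- bch v f = (1/2) • c
  have hvf : bch v f = (1 / 2 : ℚ) • c := by
    rw [hv, hassoc, ← hc, hcomm (-((1 / 2 : ℚ) • c)) c (by simp)]
    module
  -- ι v = bch ((1/2)•c) (-f)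
  have hιv : ι v = bch ((1 / 2 : ℚ) • c) (-f) := by
    rw [hv, hnat, hιe]
    congr 1
    have h := ι.toLieHom.map_smul (1 / 2 : ℚ) (-c)
    change ι ((1 / 2 : ℚ) • -c) = (1 / 2 : ℚ) • ι (-c) at h
    have h2 := ι.toLieHom.map_neg c
    change ι (-c) = -ι c at h2
    rw [← smul_neg, h, h2, hιc, neg_neg]
  rw [hιv, ← hvf, hassoc, hf0, hv0]
end

section
/- In the completed free Lie algebra on e, f, the element q = BCH(-v/2, e, f, v/2) with v = BCH(-(1/2)BCH(e,f), e) satisfies ι(q) = -q and σ(q) = q, where ι(e) = -f, ι(f) = -e and σ swaps e and f. -/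
/-- in the completed free Lie algebra on `e`, `f` (modeled as a Lie
algebra `L` over ℚ with BCH product `bch`, associative, additive on commuting
elements, with `BCH(-y,-x) = -BCH(x,y)`, together with the inner automorphisms
`expAd w = exp(ad_w)` and naturality of BCH under them), the element
`q = BCH(-v/2, e, f, v/2)` with `v = BCH(-(1/2)BCH(e,f), e)` satisfies
`ι(q) = -q` and `σ(q) = q`, where `ι(e) = -f`, `ι(f) = -e` and `σ` swaps `e`, `f`. -/
theorem q_symmetry
    (L : Type*) [LieRing L] [LieAlgebra ℚ L]
    (bch : L → L → L)
    (hassoc : ∀ x y z : L, bch (bch x y) z = bch x (bch y z))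
    (hcomm : ∀ x y : L, ⁅x, y⁆ = 0 → bch x y = x + y)
    (hanti : ∀ x y : L, bch (-x) (-y) = -(bch y x))
    (expAd : L → L →ₗ[ℚ] L)
    (hexpAdDef : ∀ (w x : L), expAd w x = bch (bch w x) (-w))
    (hexpAdNat : ∀ (w x y : L), bch (expAd w x) (expAd w y) = expAd w (bch x y))
    (e f : L)
    (ι : L ≃ₗ⁅ℚ⁆ L) (hιe : ι e = -f) (hιf : ι f = -e)
    (hnatι : ∀ x y : L, ι (bch x y) = bch (ι x) (ι y))
    (σ : L ≃ₗ⁅ℚ⁆ L) (hσe : σ e = f) (hσf : σ f = e)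
    (hnatσ : ∀ x y : L, σ (bch x y) = bch (σ x) (σ y))
    (v q : L)
    (hv : v = bch (-((1 / 2 : ℚ) • bch e f)) e)
    (hq : q = bch (bch (bch (-((1 / 2 : ℚ) • v)) e) f) ((1 / 2 : ℚ) • v)) :
    ι q = -q ∧ σ q = q := by
  have bch0r : ∀ x : L, bch x 0 = x := fun x => by
    rw [hcomm x 0 (lie_zero x), add_zero]
  have bch0l : ∀ x : L, bch 0 x = x := fun x => by
    rw [hcomm 0 x (zero_lie x), zero_add]
  have bchnn : ∀ x : L, bch x (-x) = 0 := fun x => by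
    rw [hcomm x (-x) (by simp), add_neg_cancel]
  have bchnn' : ∀ x : L, bch (-x) x = 0 := fun x => by
    rw [hcomm (-x) x (by simp), neg_add_cancel]
  have ιsmul : ∀ (a : ℚ) (x : L), ι (a • x) = a • ι x := fun a x =>
    ι.toLinearEquiv.map_smul a x
  have ιneg : ∀ x : L, ι (-x) = -(ι x) := fun x => ι.toLinearEquiv.map_neg x
  have σsmul : ∀ (a : ℚ) (x : L), σ (a • x) = a • σ x := fun a x =>
    σ.toLinearEquiv.map_smul a x
  have σneg : ∀ x : L, σ (-x) = -(σ x) := fun x => σ.toLinearEquiv.map_neg x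
  set c := bch e f with hc
  set c' := bch f e with hc'
  have h1 : bch (-((1 / 2 : ℚ) • c)) c = (1 / 2 : ℚ) • c := by
    rw [hcomm _ _ (by simp)]; module
  have hhalf : bch ((1 / 2 : ℚ) • c) ((1 / 2 : ℚ) • c) = c := by
    rw [hcomm _ _ (by simp)]; module
  -- second expression for v
  have hvf : bch v f = (1 / 2 : ℚ) • c := by
    rw [hv, hassoc, ← hc, h1]
  have hv2 : v = bch ((1 / 2 : ℚ) • c) (-f) := by
    have hvfmf : bch (bch v f) (-f) = v := by rw [hassoc, bchnn, bch0r]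
    rw [← hvfmf, hvf]
  -- action of ι
  have hιc : ι c = -c := by rw [hc, hnatι, hιe, hιf, hanti]
  have hσc : σ c = c' := by rw [hc, hnatσ, hσe, hσf]
  have hιv : ι v = v := by
    conv_lhs => rw [hv2]
    rw [hnatι, ιsmul, hιc, ιneg, hιf, neg_neg, smul_neg, ← hv]
  -- σ v = -v, via expAd f
  have hefc : expAd f c = c' := by
    rw [hexpAdDef, hassoc, hc, hassoc, bchnn, bch0r, ← hc']
  have h2 : bch (bch f (-((1 / 2 : ℚ) • c))) (-f) = -((1 / 2 : ℚ) • c') := by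
    rw [← hexpAdDef, map_neg, map_smul, hefc]
  have h3 : bch f (-((1 / 2 : ℚ) • c)) = bch (-((1 / 2 : ℚ) • c')) f := by
    have h4 : bch (bch (bch f (-((1 / 2 : ℚ) • c))) (-f)) f
        = bch f (-((1 / 2 : ℚ) • c)) := by
      rw [hassoc, bchnn', bch0r]
    rw [← h4, h2]
  have hnegv : -v = bch f (-((1 / 2 : ℚ) • c)) := by
    rw [hv2, ← hanti (-f) ((1 / 2 : ℚ) • c), neg_neg]
  have hσv : σ v = -v := by
    conv_lhs => rw [hv]
    rw [hnatσ, σneg, σsmul, hσc, hσe, ← h3, ← hnegv]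
  -- c' = bch (bch (-v) c) v
  have hnegv2 : -v = bch (-e) ((1 / 2 : ℚ) • c) := by
    rw [hv, ← hanti e (-((1 / 2 : ℚ) • c)), neg_neg]
  have h1' : bch c (-((1 / 2 : ℚ) • c)) = (1 / 2 : ℚ) • c := by
    rw [hcomm _ _ (by simp)]; module
  have hcv : bch c v = bch ((1 / 2 : ℚ) • c) e := by
    rw [hv, ← hassoc, h1']
  have hc'vc : bch (bch (-v) c) v = c' := by
    rw [hassoc, hcv, hnegv2, hassoc,
      ← hassoc ((1 / 2 : ℚ) • c) ((1 / 2 : ℚ) • c) e, hhalf, hc, hassoc,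
      ← hassoc (-e) e (bch f e), bchnn', bch0l, ← hc']
  -- rewrite q
  have hq2 : q = bch (bch (-((1 / 2 : ℚ) • v)) c) ((1 / 2 : ℚ) • v) := by
    rw [hq, hassoc (-((1 / 2 : ℚ) • v)) e f, ← hc]
  have hnegq : -q = bch (bch (-((1 / 2 : ℚ) • v)) (-c)) ((1 / 2 : ℚ) • v) := by
    rw [hq2, ← hanti ((1 / 2 : ℚ) • v) (bch (-((1 / 2 : ℚ) • v)) c),
      ← hanti c (-((1 / 2 : ℚ) • v)), neg_neg, ← hassoc]
  have hιq : ι q = -q := by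
    conv_lhs => rw [hq2]
    rw [hnatι, hnatι, ιneg, ιsmul, hιv, hιc, hnegq]
  have hs1 : bch ((1 / 2 : ℚ) • v) (-v) = -((1 / 2 : ℚ) • v) := by
    rw [hcomm _ _ (by simp)]; module
  have hs2 : bch v (-((1 / 2 : ℚ) • v)) = (1 / 2 : ℚ) • v := by
    rw [hcomm _ _ (by simp)]; module
  have hσq : σ q = q := by
    conv_lhs => rw [hq2]
    rw [hnatσ, hnatσ, σneg, σsmul, hσv, hσc, smul_neg, neg_neg,
      ← hc'vc, ← hassoc ((1 / 2 : ℚ) • v) (bch (-v) c) v,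
      ← hassoc ((1 / 2 : ℚ) • v) (-v) c, hs1, hassoc, hs2, ← hq2]
  exact ⟨hιq, hσq⟩
end
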